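/- arXiv:2605.25864 — 2 statements merged into one kernel-verified Lean document; each statement's English description precedes it below -/
import Mathlib

section
/- Let K ∈ ℝ^{G×G} be symmetric positive definite, and let u, v be unit vectors in ℝ^G lying in the hyperplane H = {w : 1ᵀw = 0}, with γ = ⟨u, v⟩ ∈ (−1, 1). Let λ_max and λ_min be the maximum and minimum of the Rayleigh quotient wᵀKw/wᵀw over nonzero w ∈ H, and set κ = λ_max/λ_min. Then (uᵀKv)/(√(uᵀKu)·√(vᵀKv)) ≤ (κ(1+γ) − (1−γ)) / (κ(1+γ) + (1−γ)). -/
open Matrix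

/-!
On a subspace `S` on which the Rayleigh quotient of `K` lies in `[λmin, λmax]`, the forms
`K - λmin • 1` and `λmax • 1 - K` are positive semidefinite. Cauchy–Schwarz for them gives, with
`a = uᵀKu`, `b = vᵀKv`, `d = uᵀKv` and `r = √a √b`,
`(d - λmin γ)² ≤ (a - λmin)(b - λmin) ≤ (r - λmin)²` and
`(λmax γ - d)² ≤ (λmax - a)(λmax - b) ≤ (λmax - r)²`, the second steps by AM–GM.
Adding the resulting linear bounds `d - λmin γ ≤ r - λmin` and `d - λmax γ ≤ λmax - r` with
weights `λmax (1 + γ)` and `λmin (1 - γ)` cancels the terms free of `d` and `r`, which leaves the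
bound on `d / r`.
-/

variable {n : Type*} [Fintype n]

lemma Matrix.IsSymm.dotProduct_mulVec_comm {K : Matrix n n ℝ} (hK : K.IsSymm) (u v : n → ℝ) :
    u ⬝ᵥ K *ᵥ v = v ⬝ᵥ K *ᵥ u := by
  rw [dotProduct_mulVec, dotProduct_comm, ← mulVec_transpose, hK.eq]

lemma Matrix.IsSymm.dotProduct_mulVec_smul_add {K : Matrix n n ℝ} (hK : K.IsSymm) (u v : n → ℝ)
    (t : ℝ) :
    (t • u + v) ⬝ᵥ K *ᵥ (t • u + v) =
      u ⬝ᵥ K *ᵥ u * (t * t) + 2 * (u ⬝ᵥ K *ᵥ v) * t + v ⬝ᵥ K *ᵥ v := by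
  simp only [mulVec_add, mulVec_smul, dotProduct_add, add_dotProduct, dotProduct_smul,
    smul_dotProduct, smul_eq_mul, hK.dotProduct_mulVec_comm v u]
  ring

lemma Matrix.IsSymm.sq_dotProduct_mulVec_le {M : Matrix n n ℝ} (hM : M.IsSymm)
    {S : Submodule ℝ (n → ℝ)} (hS : ∀ w ∈ S, 0 ≤ w ⬝ᵥ M *ᵥ w) {u v : n → ℝ} (hu : u ∈ S)
    (hv : v ∈ S) : (u ⬝ᵥ M *ᵥ v) ^ 2 ≤ (u ⬝ᵥ M *ᵥ u) * (v ⬝ᵥ M *ᵥ v) := by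
  have hdiscrim := discrim_le_zero fun t ↦
    hM.dotProduct_mulVec_smul_add u v t ▸ hS _ (S.add_mem (S.smul_mem t hu) hv)
  rw [discrim] at hdiscrim
  linarith

lemma Matrix.IsSymm.sq_dotProduct_mulVec_sub_le {K : Matrix n n ℝ} (hK : K.IsSymm)
    {S : Submodule ℝ (n → ℝ)} {c : ℝ} (hc : ∀ w ∈ S, c * (w ⬝ᵥ w) ≤ w ⬝ᵥ K *ᵥ w)
    {u v : n → ℝ} (hu : u ∈ S) (hv : v ∈ S) :
    (u ⬝ᵥ K *ᵥ v - c * (u ⬝ᵥ v)) ^ 2 ≤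
      (u ⬝ᵥ K *ᵥ u - c * (u ⬝ᵥ u)) * (v ⬝ᵥ K *ᵥ v - c * (v ⬝ᵥ v)) := by
  classical
  have hform (x y : n → ℝ) : x ⬝ᵥ (K - c • 1) *ᵥ y = x ⬝ᵥ K *ᵥ y - c * (x ⬝ᵥ y) := by
    simp only [sub_mulVec, smul_mulVec, one_mulVec, dotProduct_sub, dotProduct_smul, smul_eq_mul]
  simpa only [hform] using (hK.sub (isSymm_one.smul c)).sq_dotProduct_mulVec_le
    (fun w hw ↦ by rw [hform]; linarith [hc w hw]) hu hv

lemma Matrix.IsSymm.sq_sub_dotProduct_mulVec_le {K : Matrix n n ℝ} (hK : K.IsSymm)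
    {S : Submodule ℝ (n → ℝ)} {c : ℝ} (hc : ∀ w ∈ S, w ⬝ᵥ K *ᵥ w ≤ c * (w ⬝ᵥ w))
    {u v : n → ℝ} (hu : u ∈ S) (hv : v ∈ S) :
    (c * (u ⬝ᵥ v) - u ⬝ᵥ K *ᵥ v) ^ 2 ≤
      (c * (u ⬝ᵥ u) - u ⬝ᵥ K *ᵥ u) * (c * (v ⬝ᵥ v) - v ⬝ᵥ K *ᵥ v) := by
  have hneg := hK.neg.sq_dotProduct_mulVec_sub_le (c := -c)
    (fun w hw ↦ by simpa [neg_mulVec] using hc w hw) hu hv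
  simp only [neg_mulVec, dotProduct_neg, neg_mul] at hneg
  convert hneg using 2 <;> ring

def rayleighQuotients (K : Matrix n n ℝ) (S : Submodule ℝ (n → ℝ)) : Set ℝ :=
  {r | ∃ w, w ≠ 0 ∧ w ∈ S ∧ r = (w ⬝ᵥ K *ᵥ w) / (w ⬝ᵥ w)}

lemma dotProduct_self_pos {w : n → ℝ} (hw : w ≠ 0) : 0 < w ⬝ᵥ w := by
  simpa using dotProduct_star_self_pos_iff.2 hw

lemma mul_dotProduct_self_le_of_mem_lowerBounds {K : Matrix n n ℝ} {S : Submodule ℝ (n → ℝ)}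
    {c : ℝ} (hc : c ∈ lowerBounds (rayleighQuotients K S)) {w : n → ℝ} (hw : w ∈ S) :
    c * (w ⬝ᵥ w) ≤ w ⬝ᵥ K *ᵥ w := by
  rcases eq_or_ne w 0 with rfl | hw0
  · simp
  · exact (le_div_iff₀ (dotProduct_self_pos hw0)).1 (hc ⟨w, hw0, hw, rfl⟩)

lemma dotProduct_mulVec_le_of_mem_upperBounds {K : Matrix n n ℝ} {S : Submodule ℝ (n → ℝ)}
    {c : ℝ} (hc : c ∈ upperBounds (rayleighQuotients K S)) {w : n → ℝ} (hw : w ∈ S) :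
    w ⬝ᵥ K *ᵥ w ≤ c * (w ⬝ᵥ w) := by
  rcases eq_or_ne w 0 with rfl | hw0
  · simp
  · exact (div_le_iff₀ (dotProduct_self_pos hw0)).1 (hc ⟨w, hw0, hw, rfl⟩)

lemma Matrix.PosDef.pos_of_mem_rayleighQuotients {K : Matrix n n ℝ} (hK : K.PosDef)
    {S : Submodule ℝ (n → ℝ)} {r : ℝ} (hr : r ∈ rayleighQuotients K S) : 0 < r := by
  obtain ⟨w, hw0, -, rfl⟩ := hr
  have hKw := hK.dotProduct_mulVec_pos hw0
  rw [star_trivial] at hKw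
  exact div_pos hKw (dotProduct_self_pos hw0)

lemma sub_mul_sub_le_sq_sub_sqrt_mul_sqrt {a b c : ℝ} (ha : 0 ≤ a) (hb : 0 ≤ b) (hc : 0 ≤ c) :
    (c - a) * (c - b) ≤ (c - √a * √b) ^ 2 := by
  nlinarith [mul_nonneg hc (sq_nonneg (√a - √b)), Real.sq_sqrt ha, Real.sq_sqrt hb]

lemma abs_le_sqrt_mul_sqrt_sub {a b c d : ℝ} (hc : 0 ≤ c) (ha : c ≤ a) (hb : c ≤ b)
    (h : d ^ 2 ≤ (a - c) * (b - c)) : |d| ≤ √a * √b - c := by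
  have hsqrt : c ≤ √a * √b := by
    calc c = √c * √c := (Real.mul_self_sqrt hc).symm
      _ ≤ √a * √b := by gcongr
  refine abs_le_of_sq_le_sq ?_ (sub_nonneg.2 hsqrt)
  calc d ^ 2 ≤ (c - a) * (c - b) := by linarith
    _ ≤ (c - √a * √b) ^ 2 := sub_mul_sub_le_sq_sub_sqrt_mul_sqrt (hc.trans ha) (hc.trans hb) hc
    _ = (√a * √b - c) ^ 2 := by ring

lemma abs_le_sub_sqrt_mul_sqrt {a b c d : ℝ} (ha : 0 ≤ a) (hb : 0 ≤ b) (hac : a ≤ c) (hbc : b ≤ c)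
    (h : d ^ 2 ≤ (c - a) * (c - b)) : |d| ≤ c - √a * √b := by
  have hsqrt : √a * √b ≤ c := by
    calc √a * √b ≤ √c * √c := by gcongr
      _ = c := Real.mul_self_sqrt (ha.trans hac)
  exact abs_le_of_sq_le_sq (h.trans (sub_mul_sub_le_sq_sub_sqrt_mul_sqrt ha hb (ha.trans hac)))
    (sub_nonneg.2 hsqrt)

lemma div_le_condition_number_bound {lmin lmax γ d r : ℝ} (hlmin : 0 < lmin)
    (hlmax : lmin ≤ lmax) (hγl : -1 < γ) (hγu : γ < 1) (hr : 0 < r)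
    (hlow : d - lmin * γ ≤ r - lmin) (hup : d - lmax * γ ≤ lmax - r) :
    d / r ≤ (lmax / lmin * (1 + γ) - (1 - γ)) / (lmax / lmin * (1 + γ) + (1 - γ)) := by
  have hwmax : 0 ≤ lmax * (1 + γ) := mul_nonneg (hlmin.le.trans hlmax) (by linarith)
  have hwmin : 0 ≤ lmin * (1 - γ) := mul_nonneg hlmin.le (by linarith)
  have hcomb :
      d * (lmax * (1 + γ) + lmin * (1 - γ)) ≤ r * (lmax * (1 + γ) - lmin * (1 - γ)) := by
    linarith [mul_le_mul_of_nonneg_left hlow hwmax, mul_le_mul_of_nonneg_left hup hwmin]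
  have hden : 0 < lmax / lmin * (1 + γ) + (1 - γ) := by
    have : 0 ≤ lmax / lmin := div_nonneg (hlmin.le.trans hlmax) hlmin.le
    nlinarith
  rw [div_le_div_iff₀ hr hden, ← mul_le_mul_iff_right₀ hlmin]
  field_simp
  linarith

theorem Matrix.PosDef.dotProduct_mulVec_div_le {K : Matrix n n ℝ} (hK : K.PosDef)
    {S : Submodule ℝ (n → ℝ)} {u v : n → ℝ} (hu : u ⬝ᵥ u = 1) (hv : v ⬝ᵥ v = 1) (huS : u ∈ S)
    (hvS : v ∈ S) (hγl : -1 < u ⬝ᵥ v) (hγu : u ⬝ᵥ v < 1) {lmax lmin : ℝ}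
    (hmax : lmax ∈ upperBounds (rayleighQuotients K S))
    (hmin : IsLeast (rayleighQuotients K S) lmin) :
    (u ⬝ᵥ K *ᵥ v) / (√(u ⬝ᵥ K *ᵥ u) * √(v ⬝ᵥ K *ᵥ v)) ≤
      (lmax / lmin * (1 + u ⬝ᵥ v) - (1 - u ⬝ᵥ v)) /
        (lmax / lmin * (1 + u ⬝ᵥ v) + (1 - u ⬝ᵥ v)) := by
  have hsymm : K.IsSymm := isHermitian_iff_isSymm.1 hK.isHermitian
  have hlmin : 0 < lmin := hK.pos_of_mem_rayleighQuotients hmin.1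
  have hlow (w) (hw : w ∈ S) := mul_dotProduct_self_le_of_mem_lowerBounds hmin.2 hw
  have hup (w) (hw : w ∈ S) := dotProduct_mulVec_le_of_mem_upperBounds hmax hw
  have hcs_low := hsymm.sq_dotProduct_mulVec_sub_le hlow huS hvS
  have hcs_up := hsymm.sq_sub_dotProduct_mulVec_le hup huS hvS
  have hu_low := hlow u huS
  have hu_up := hup u huS
  have hv_low := hlow v hvS
  have hv_up := hup v hvS
  rw [hu, mul_one] at hcs_low hcs_up hu_low hu_up
  rw [hv, mul_one] at hcs_low hcs_up hv_low hv_up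
  apply div_le_condition_number_bound hlmin (hu_low.trans hu_up) hγl hγu
  · exact mul_pos (Real.sqrt_pos.2 (hlmin.trans_le hu_low))
      (Real.sqrt_pos.2 (hlmin.trans_le hv_low))
  · exact (le_abs_self _).trans (abs_le_sqrt_mul_sqrt_sub hlmin.le hu_low hv_low hcs_low)
  · exact (le_abs_self _).trans <| (abs_sub_comm _ _).trans_le <|
      abs_le_sub_sqrt_mul_sqrt (hlmin.le.trans hu_low) (hlmin.le.trans hv_low) hu_up hv_up hcs_up

def centeredSubspace (n : Type*) [Fintype n] : Submodule ℝ (n → ℝ) where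
  carrier := {w | ∑ i, w i = 0}
  add_mem' {x y} hx hy := by simp_all [Finset.sum_add_distrib]
  zero_mem' := by simp
  smul_mem' c x hx := by simp_all [← Finset.mul_sum]

theorem stmt_5_general (G : ℕ) (K : Matrix (Fin G) (Fin G) ℝ)
    (hKpd : K.PosDef)
    (u v : Fin G → ℝ) (hu : u ⬝ᵥ u = 1) (hv : v ⬝ᵥ v = 1)
    (huH : ∑ i, u i = 0) (hvH : ∑ i, v i = 0)
    (γ : ℝ) (hγ : γ = u ⬝ᵥ v) (hγl : -1 < γ) (hγu : γ < 1)
    (lmax lmin : ℝ)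
    (hmax : IsGreatest
      {r : ℝ | ∃ w : Fin G → ℝ, w ≠ 0 ∧ (∑ i, w i = 0) ∧
        r = (w ⬝ᵥ K.mulVec w) / (w ⬝ᵥ w)} lmax)
    (hmin : IsLeast
      {r : ℝ | ∃ w : Fin G → ℝ, w ≠ 0 ∧ (∑ i, w i = 0) ∧
        r = (w ⬝ᵥ K.mulVec w) / (w ⬝ᵥ w)} lmin)
    (κ : ℝ) (hκ : κ = lmax / lmin) :
    (u ⬝ᵥ K.mulVec v) /
      (Real.sqrt (u ⬝ᵥ K.mulVec u) * Real.sqrt (v ⬝ᵥ K.mulVec v)) ≤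
      (κ * (1 + γ) - (1 - γ)) / (κ * (1 + γ) + (1 - γ)) := by
  subst hγ hκ
  exact hKpd.dotProduct_mulVec_div_le (S := centeredSubspace (Fin G)) hu hv huH hvH hγl hγu
    hmax.2 hmin

/-- K-weighted cosine bound: for unit vectors `u, v` in the centered hyperplane with
Euclidean cosine `γ`, the `K`-weighted cosine is at most
`(κ(1+γ) - (1-γ)) / (κ(1+γ) + (1-γ))` where `κ` is the condition number of `K` on `H`. -/
theorem stmt_5 (G : ℕ) (hG : 2 ≤ G) (K : Matrix (Fin G) (Fin G) ℝ)
    (hKsymm : K.IsSymm) (hKpd : K.PosDef)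
    (u v : Fin G → ℝ) (hu : u ⬝ᵥ u = 1) (hv : v ⬝ᵥ v = 1)
    (huH : ∑ i, u i = 0) (hvH : ∑ i, v i = 0)
    (γ : ℝ) (hγ : γ = u ⬝ᵥ v) (hγl : -1 < γ) (hγu : γ < 1)
    (lmax lmin : ℝ)
    (hmax : IsGreatest
      {r : ℝ | ∃ w : Fin G → ℝ, w ≠ 0 ∧ (∑ i, w i = 0) ∧
        r = (w ⬝ᵥ K.mulVec w) / (w ⬝ᵥ w)} lmax)
    (hmin : IsLeast
      {r : ℝ | ∃ w : Fin G → ℝ, w ≠ 0 ∧ (∑ i, w i = 0) ∧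
        r = (w ⬝ᵥ K.mulVec w) / (w ⬝ᵥ w)} lmin)
    (κ : ℝ) (hκ : κ = lmax / lmin) :
    (u ⬝ᵥ K.mulVec v) /
      (Real.sqrt (u ⬝ᵥ K.mulVec u) * Real.sqrt (v ⬝ᵥ K.mulVec v)) ≤
      (κ * (1 + γ) - (1 - γ)) / (κ * (1 + γ) + (1 - γ)) :=
  stmt_5_general G K hKpd u v hu hv huH hvH γ hγ hγl hγu lmax lmin hmax hmin κ hκ
end

section
/- Let G ≥ 2 and let r̃ = (1,...,1,0,...,0) ∈ {0,1}^G with m ones (1 ≤ m ≤ G−1) be a pseudo-reward, and r = (0,...,0,1,...,1,0,...,0) a candidate ground-truth reward with k ones placed in positions m+1,...,m+k (1 ≤ k ≤ G−m). Let Ã and A be the respective GRPO group-normalized advantages A_i = (r_i − mean)/std. Then the CAG score s(k) = ‖A − Ã‖₂ satisfies s(k)² = 2G·(1 + √(mk/((G−m)(G−k)))). -/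
/-!
Centring a reward vector `x` at its mean and scaling by `σ` turns inner products into
covariances: `⟨(x - μ)/σ, (y - ν)/τ⟩ = (⟨x, y⟩ - G μ ν) / (σ τ)`. For indicator vectors
`⟨1_s, 1_t⟩ = #(s ∩ t)`, so every GRPO advantage has squared norm `G`, and two advantages with
disjoint supports have inner product `-G √(mk / ((G - m)(G - k)))`. Expanding
`‖A - Ã‖² = ‖A‖² - 2⟨A, Ã⟩ + ‖Ã‖²` gives the formula.
-/

open Finset Matrix

theorem Fin.card_filter_le_val_and_val_lt {n a b : ℕ} (hab : a ≤ b) :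
    #{i : Fin n | a ≤ ↑i ∧ ↑i < b} = min n b - min n a := by
  have hsub : ({i | ↑i < a} : Finset (Fin n)) ⊆ ({i | ↑i < b} : Finset (Fin n)) := by
    intro i; simp only [mem_filter, mem_univ, true_and]; omega
  have hwin : ({i | a ≤ ↑i ∧ ↑i < b} : Finset (Fin n)) =
      ({i | ↑i < b} : Finset (Fin n)) \ ({i | ↑i < a} : Finset (Fin n)) := by
    ext i; simp only [mem_filter, mem_sdiff, mem_univ, true_and]; omega
  rw [hwin, card_sdiff_of_subset hsub, Fin.card_filter_val_lt, Fin.card_filter_val_lt]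

lemma Real.mul_div_sqrt_mul_mul_sqrt_mul {a b c d : ℝ} (ha : 0 ≤ a) (hb : 0 ≤ b) (hc : 0 ≤ c) :
    a * b / (√(a * c) * √(b * d)) = √(a * b / (c * d)) := by
  have hab : 0 ≤ a * b := mul_nonneg ha hb
  rw [Real.sqrt_div hab, ← Real.sqrt_mul (mul_nonneg ha hc),
    show a * c * (b * d) = a * b * (c * d) by ring, Real.sqrt_mul hab]
  rcases hab.eq_or_lt with h | h
  · simp [← h]
  · nth_rewrite 1 [← Real.mul_self_sqrt hab]
    exact mul_div_mul_left _ _ (Real.sqrt_pos.2 h).ne'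

section
variable {ι : Type*} [Fintype ι]

lemma sub_div_dotProduct_sub_div (x y : ι → ℝ) (μ ν σ τ : ℝ) :
    (fun i ↦ (x i - μ) / σ) ⬝ᵥ (fun i ↦ (y i - ν) / τ)
      = (x ⬝ᵥ y - μ * ∑ i, y i - ν * ∑ i, x i + Fintype.card ι * μ * ν) / (σ * τ) := by
  simp only [dotProduct, div_mul_div_comm, ← sum_div, sub_mul, mul_sub, sum_sub_distrib,
    ← mul_sum, ← sum_mul, sum_const, card_univ, nsmul_eq_mul]
  ring

variable [DecidableEq ι]

lemma dotProduct_ite_mem (s t : Finset ι) :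
    (fun i ↦ if i ∈ s then (1 : ℝ) else 0) ⬝ᵥ (fun i ↦ if i ∈ t then 1 else 0) = #(s ∩ t) := by
  simp [dotProduct, inter_comm]

/-- `√(#s (G - #s)) / G` is the population standard deviation of the binary reward `1_s`. -/
noncomputable def grpoAdvantage (s : Finset ι) (i : ι) : ℝ :=
  ((if i ∈ s then 1 else 0) - #s / Fintype.card ι) /
    (√(#s * (Fintype.card ι - #s)) / Fintype.card ι)

lemma grpoAdvantage_dotProduct (s t : Finset ι) :
    grpoAdvantage s ⬝ᵥ grpoAdvantage t =
      Fintype.card ι * (Fintype.card ι * #(s ∩ t) - #s * #t) /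
        (√(#s * (Fintype.card ι - #s)) * √(#t * (Fintype.card ι - #t))) := by
  have hsum (u : Finset ι) : ∑ i, (if i ∈ u then (1 : ℝ) else 0) = #u := by simp
  unfold grpoAdvantage
  rw [sub_div_dotProduct_sub_div, hsum, hsum, dotProduct_ite_mem]
  rcases eq_or_ne (Fintype.card ι : ℝ) 0 with h | h
  · simp [h]
  · field_simp
    ring

lemma grpoAdvantage_dotProduct_self {s : Finset ι} (hs : s.Nonempty) (hs' : s ≠ univ) :
    grpoAdvantage s ⬝ᵥ grpoAdvantage s = Fintype.card ι := by
  have h₁ : (0 : ℝ) < #s := by exact_mod_cast hs.card_pos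
  have h₂ : (0 : ℝ) < Fintype.card ι - #s := by
    have : (#s : ℝ) < Fintype.card ι := by exact_mod_cast (card_lt_iff_ne_univ s).2 hs'
    linarith
  rw [grpoAdvantage_dotProduct, inter_self, Real.mul_self_sqrt (mul_pos h₁ h₂).le]
  field_simp

lemma grpoAdvantage_dotProduct_of_disjoint {s t : Finset ι} (hst : Disjoint s t) :
    grpoAdvantage s ⬝ᵥ grpoAdvantage t =
      -Fintype.card ι * √(#s * #t / ((Fintype.card ι - #s) * (Fintype.card ι - #t))) := by
  have hle (u : Finset ι) : (0 : ℝ) ≤ Fintype.card ι - #u := by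
    simpa using (Nat.cast_le (α := ℝ)).2 u.card_le_univ
  rw [grpoAdvantage_dotProduct, disjoint_iff_inter_eq_empty.1 hst, card_empty, Nat.cast_zero,
    mul_zero, zero_sub, mul_neg, neg_div, mul_div_assoc, ← neg_mul,
    Real.mul_div_sqrt_mul_mul_sqrt_mul (Nat.cast_nonneg _) (Nat.cast_nonneg _) (hle s)]

lemma grpoAdvantage_sub_dotProduct_sub_of_disjoint {s t : Finset ι} (hs : s.Nonempty)
    (ht : t.Nonempty) (hst : Disjoint s t) :
    (grpoAdvantage s - grpoAdvantage t) ⬝ᵥ (grpoAdvantage s - grpoAdvantage t) =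
      2 * Fintype.card ι * (1 + √(#s * #t / ((Fintype.card ι - #s) * (Fintype.card ι - #t)))) := by
  have hs' : s ≠ univ := fun h ↦ disjoint_right.1 hst ht.choose_spec (h ▸ mem_univ _)
  have ht' : t ≠ univ := fun h ↦ disjoint_left.1 hst hs.choose_spec (h ▸ mem_univ _)
  rw [sub_dotProduct, dotProduct_sub, dotProduct_sub, dotProduct_comm (grpoAdvantage t),
    grpoAdvantage_dotProduct_self hs hs', grpoAdvantage_dotProduct_self ht ht',
    grpoAdvantage_dotProduct_of_disjoint hst]
  ring

end

theorem stmt_9_general (G m k : ℕ) (hm1 : 1 ≤ m)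
    (hk1 : 1 ≤ k) (hk2 : k ≤ G - m)
    (rtil r : Fin G → ℝ)
    (hrtil : ∀ i : Fin G, rtil i = if (i : ℕ) < m then 1 else 0)
    (hr : ∀ i : Fin G, r i = if m ≤ (i : ℕ) ∧ (i : ℕ) < m + k then 1 else 0)
    (Atil A : Fin G → ℝ)
    (hAtil : ∀ i, Atil i = (rtil i - (m : ℝ) / G) / (Real.sqrt ((m : ℝ) * (G - m)) / G))
    (hA : ∀ i, A i = (r i - (k : ℝ) / G) / (Real.sqrt ((k : ℝ) * (G - k)) / G)) :
    (A - Atil) ⬝ᵥ (A - Atil) =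
      2 * G * (1 + Real.sqrt ((m : ℝ) * k / (((G : ℝ) - m) * ((G : ℝ) - k)))) := by
  set s : Finset (Fin G) := {i | ↑i < m}
  set t : Finset (Fin G) := {i | m ≤ ↑i ∧ ↑i < m + k}
  have hs : #s = m := by
    rw [Fin.card_filter_val_lt]; omega
  have ht : #t = k := by
    rw [Fin.card_filter_le_val_and_val_lt (by omega)]; omega
  have hAtil' : Atil = grpoAdvantage s := by
    ext i; simp [grpoAdvantage, hAtil, hrtil, hs, s]
  have hA' : A = grpoAdvantage t := by
    ext i; simp [grpoAdvantage, hA, hr, ht, t]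
  have hst : Disjoint t s := by
    simp only [disjoint_left, s, t, mem_filter, mem_univ, true_and]; omega
  have hs₀ : s.Nonempty := card_pos.1 (by omega)
  have ht₀ : t.Nonempty := card_pos.1 (by omega)
  rw [hAtil', hA', grpoAdvantage_sub_dotProduct_sub_of_disjoint ht₀ hs₀ hst, ht, hs,
    Fintype.card_fin, mul_comm (k : ℝ), mul_comm ((G : ℝ) - k)]

/-- Class-wise CAG score for disjoint-support binary rewards:
`s(k)² = 2G (1 + √(mk / ((G-m)(G-k))))`. -/
theorem stmt_9 (G m k : ℕ) (hG : 2 ≤ G) (hm1 : 1 ≤ m) (hm2 : m ≤ G - 1)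
    (hk1 : 1 ≤ k) (hk2 : k ≤ G - m)
    (rtil r : Fin G → ℝ)
    (hrtil : ∀ i : Fin G, rtil i = if (i : ℕ) < m then 1 else 0)
    (hr : ∀ i : Fin G, r i = if m ≤ (i : ℕ) ∧ (i : ℕ) < m + k then 1 else 0)
    (Atil A : Fin G → ℝ)
    (hAtil : ∀ i, Atil i = (rtil i - (m : ℝ) / G) / (Real.sqrt ((m : ℝ) * (G - m)) / G))
    (hA : ∀ i, A i = (r i - (k : ℝ) / G) / (Real.sqrt ((k : ℝ) * (G - k)) / G)) :
    (A - Atil) ⬝ᵥ (A - Atil) =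
      2 * G * (1 + Real.sqrt ((m : ℝ) * k / (((G : ℝ) - m) * ((G : ℝ) - k)))) :=
  stmt_9_general G m k hm1 hk1 hk2 rtil r hrtil hr Atil A hAtil hA
end
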